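/- arXiv:1403.4144 — 6 statements merged into one kernel-verified Lean document; each statement's English description precedes it below -/
import Mathlib

section
/- For the dual LP with multi-cluster cardinality-based rates where, within each cluster, the demands d_i are sorted in descending order, there exists an optimal solution π* such that within each cluster the values π*_i are also in descending order (i.e., d_i ≥ d_l implies π*_i ≥ π*_l for i, l in the same cluster). -/
/-!
Since the rates depend only on cluster membership and group profile, the dual feasible region
is convex and invariant under permutations of the coordinates that preserve clusters. Starting
from an optimal `π`, permute its values within clusters so as to maximize the objective: by the
exchange argument behind the rearrangement inequality, the result is then ordered along `d`
wherever the demands differ strictly. Averaging it over the permutations that fix both cluster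
and demand keeps it feasible and optimal, preserves those strict comparisons, and makes the
values at tied demands equal.
-/

open Finset Equiv
open scoped BigOperators

variable {ι α β : Type*}

lemma Convex.expect_mem {s : Set (ι → ℝ)} (hs : Convex ℝ s) {t : Finset β} (ht : t.Nonempty)
    {z : β → ι → ℝ} (hz : ∀ j ∈ t, z j ∈ s) : 𝔼 j ∈ t, z j ∈ s := by
  have hexpect : 𝔼 j ∈ t, z j = ∑ j ∈ t, (#t : ℝ)⁻¹ • z j := by
    ext i
    simp [expect_eq_sum_div_card, Finset.sum_apply, div_eq_inv_mul, mul_sum]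
  rw [hexpect]
  exact hs.sum_mem (fun _ _ => by positivity) (by simp [card_ne_zero.2 ht]) hz

lemma sum_mul_expect_comp [Fintype ι] {G : Finset (Perm ι)} (hG : G.Nonempty) {d : ι → ℝ}
    (hd : ∀ τ ∈ G, d ∘ τ = d) (x : ι → ℝ) :
    ∑ i, d i * (𝔼 τ ∈ G, x ∘ τ) i = ∑ i, d i * x i := by
  have hinv : ∀ τ ∈ G, ∑ i, d i * x (τ i) = ∑ i, d i * x i := fun τ hτ => by
    conv_lhs => rw [← hd τ hτ]
    exact Equiv.sum_comp τ fun i => d i * x i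
  simp_rw [expect_apply, Function.comp_apply, mul_expect, ← expect_sum_comm]
  rw [expect_congr rfl hinv, expect_const hG]

section Fibers

variable [Fintype ι] [DecidableEq ι]

noncomputable def fiberPerms (f : ι → α) : Finset (Perm ι) := by
  classical exact {τ | f ∘ τ = f}

lemma mem_fiberPerms {f : ι → α} {τ : Perm ι} :
    τ ∈ fiberPerms f ↔ f ∘ τ = f := by
  classical simp [fiberPerms]

lemma one_mem_fiberPerms (f : ι → α) : 1 ∈ fiberPerms f :=
  mem_fiberPerms.2 rfl

lemma mul_swap_mem_fiberPerms {f : ι → α} {τ : Perm ι} (hτ : τ ∈ fiberPerms f)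
    {i l : ι} (h : f i = f l) : τ * swap i l ∈ fiberPerms f := by
  rw [mem_fiberPerms] at hτ ⊢
  ext j
  change f (τ (swap i l j)) = f j
  rw [← Function.comp_apply (f := f), hτ]
  rcases eq_or_ne j i with rfl | hji
  · rw [swap_apply_left, h]
  rcases eq_or_ne j l with rfl | hjl
  · rw [swap_apply_right, h]
  · rw [swap_apply_of_ne_of_ne hji hjl]

lemma sum_mul_comp_swap (d x : ι → ℝ) (i l : ι) :
    ∑ j, d j * x (swap i l j) = ∑ j, d j * x j + (d i - d l) * (x l - x i) := by
  rcases eq_or_ne i l with rfl | hil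
  · simp
  rw [← sub_eq_iff_eq_add', ← sum_sub_distrib, Fintype.sum_eq_add i l hil fun j hj => by
    rw [swap_apply_of_ne_of_ne hj.1 hj.2, sub_self]]
  rw [swap_apply_left, swap_apply_right]
  ring

lemma exists_rearrangement_in_fibers (f : ι → α) (d x : ι → ℝ) :
    ∃ σ ∈ fiberPerms f, ∑ i, d i * x i ≤ ∑ i, d i * x (σ i) ∧
      ∀ i l, f i = f l → d l < d i → x (σ l) ≤ x (σ i) := by
  obtain ⟨σ, hσ, hmax⟩ := (fiberPerms f).exists_max_image (fun σ => ∑ i, d i * x (σ i))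
    ⟨1, one_mem_fiberPerms f⟩
  refine ⟨σ, hσ, by simpa using hmax 1 (one_mem_fiberPerms f), fun i l hf hd => ?_⟩
  -- otherwise swapping `i` and `l` after `σ` would increase the objective
  have hswap := hmax _ (mul_swap_mem_fiberPerms hσ hf)
  simp only [Perm.mul_apply] at hswap
  rw [sum_mul_comp_swap d (fun j => x (σ j))] at hswap
  by_contra! hlt
  linarith [mul_pos (sub_pos.2 hd) (sub_pos.2 hlt)]

lemma expect_comp_fiberPerms_apply_eq {f : ι → α} (x : ι → ℝ) {i l : ι}
    (h : f i = f l) :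
    (𝔼 τ ∈ fiberPerms f, x ∘ τ) l = (𝔼 τ ∈ fiberPerms f, x ∘ τ) i := by
  simp only [expect_apply, Function.comp_apply]
  refine expect_nbij' (· * swap i l) (· * swap i l) (fun τ hτ => mul_swap_mem_fiberPerms hτ h)
    (fun τ hτ => mul_swap_mem_fiberPerms hτ h) (fun τ _ => by simp [mul_assoc])
    (fun τ _ => by simp [mul_assoc]) (fun τ _ => by simp)

theorem Convex.exists_fiberwise_monotone_mem {s : Set (ι → ℝ)}
    (hs : Convex ℝ s) {f : ι → α} (hinv : ∀ τ ∈ fiberPerms f, ∀ x ∈ s, x ∘ τ ∈ s)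
    (d : ι → ℝ) {x : ι → ℝ} (hx : x ∈ s) :
    ∃ y ∈ s, ∑ i, d i * x i ≤ ∑ i, d i * y i ∧ ∀ i l, f i = f l → d l ≤ d i → y l ≤ y i := by
  obtain ⟨σ, hσ, hle, hmono⟩ := exists_rearrangement_in_fibers f d x
  set G := fiberPerms fun i => (f i, d i)
  have hG : ∀ τ ∈ G, f ∘ τ = f ∧ d ∘ τ = d := fun τ hτ => by
    have h := mem_fiberPerms.1 hτ
    exact ⟨funext fun i => congrArg Prod.fst (congrFun h i),
      funext fun i => congrArg Prod.snd (congrFun h i)⟩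
  have hGne : G.Nonempty := ⟨1, one_mem_fiberPerms _⟩
  refine ⟨𝔼 τ ∈ G, (x ∘ σ) ∘ τ, hs.expect_mem hGne fun τ hτ =>
      hinv τ (mem_fiberPerms.2 (hG τ hτ).1) _ (hinv σ hσ x hx), ?_, fun i l hf hd => ?_⟩
  · rw [sum_mul_expect_comp hGne (fun τ hτ => (hG τ hτ).2)]
    exact hle
  rcases hd.lt_or_eq with hlt | heq
  · simp only [expect_apply, Function.comp_apply]
    refine expect_le_expect fun τ hτ => hmono _ _ ?_ ?_
    · simp only [← Function.comp_apply (f := f), (hG τ hτ).1, hf]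
    · simpa only [← Function.comp_apply (f := d), (hG τ hτ).2] using hlt
  · exact (expect_comp_fiberPerms_apply_eq _ (Prod.ext hf heq.symm)).le

end Fibers

section DualLP

variable {κ : Type*} [DecidableEq κ] {cluster : ι → κ}

def clusterProfile (cluster : ι → κ) (c : Finset ι) : κ → ℕ :=
  fun j => #{i ∈ c | cluster i = j}

def IsDualFeasible (cluster : ι → κ) (ρ : κ → (κ → ℕ) → ℝ) (π : ι → ℝ) : Prop :=
  (∀ i, 0 ≤ π i) ∧
    ∀ c : Finset ι, c.Nonempty → ∑ i ∈ c, ρ (cluster i) (clusterProfile cluster c) * π i ≤ 1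

lemma clusterProfile_map (c : Finset ι) {τ : ι ↪ ι} (hτ : cluster ∘ τ = cluster) :
    clusterProfile cluster (c.map τ) = clusterProfile cluster c := by
  ext j
  simp only [clusterProfile, filter_map, card_map]
  congr! 3 with i
  rw [Function.comp_apply, ← Function.comp_apply (f := cluster), hτ]

lemma IsDualFeasible.comp_perm {ρ : κ → (κ → ℕ) → ℝ} {π : ι → ℝ}
    (h : IsDualFeasible cluster ρ π) {τ : Perm ι} (hτ : cluster ∘ τ = cluster) :
    IsDualFeasible cluster ρ (π ∘ τ) := by
  refine ⟨fun i => h.1 (τ i), fun c hc => ?_⟩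
  have := h.2 (c.map τ.toEmbedding) hc.map
  rw [sum_map, clusterProfile_map c hτ] at this
  refine (sum_congr rfl fun i _ => ?_).trans_le this
  rw [← congrFun hτ i]
  rfl

lemma convex_setOf_isDualFeasible (ρ : κ → (κ → ℕ) → ℝ) :
    Convex ℝ {π : ι → ℝ | IsDualFeasible cluster ρ π} := by
  intro x hx y hy a b ha hb hab
  refine ⟨fun i => add_nonneg (smul_nonneg ha (hx.1 i)) (smul_nonneg hb (hy.1 i)),
    fun c hc => ?_⟩
  calc ∑ i ∈ c, ρ (cluster i) (clusterProfile cluster c) * (a • x + b • y) i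
      = a * ∑ i ∈ c, ρ (cluster i) (clusterProfile cluster c) * x i
        + b * ∑ i ∈ c, ρ (cluster i) (clusterProfile cluster c) * y i := by
        simp only [Pi.add_apply, Pi.smul_apply, smul_eq_mul, mul_sum, ← sum_add_distrib]
        exact sum_congr rfl fun i _ => by ring
    _ ≤ a * 1 + b * 1 := by gcongr; exacts [hx.2 c hc, hy.2 c hc]
    _ = 1 := by rw [mul_one, mul_one, hab]

end DualLP

/-- For the dual LP with multi-cluster cardinality-based rates, if an
optimal solution exists then there exists an optimal solution π* whose values within
each cluster are ordered consistently with the demands: d_i ≥ d_l implies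
π*_i ≥ π*_l for links i, l in the same cluster. -/
theorem stmt_5 (N K : ℕ) (cluster : Fin N → Fin K) (d : Fin N → ℝ)
    (ρ : Fin K → (Fin K → ℕ) → ℝ)
    (Feas : (Fin N → ℝ) → Prop)
    (hFeas : ∀ π, Feas π ↔ ((∀ i, 0 ≤ π i) ∧
      ∀ c : Finset (Fin N), c.Nonempty →
        ∑ i ∈ c, ρ (cluster i) (fun j => (c.filter (fun i' => cluster i' = j)).card) * π i ≤ 1))
    (hopt : ∃ π, Feas π ∧ ∀ π', Feas π' → ∑ i, d i * π' i ≤ ∑ i, d i * π i) :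
    ∃ π, Feas π ∧ (∀ π', Feas π' → ∑ i, d i * π' i ≤ ∑ i, d i * π i) ∧
      ∀ i l, cluster i = cluster l → d l ≤ d i → π l ≤ π i := by
  obtain rfl : Feas = IsDualFeasible cluster ρ := funext fun π => propext (hFeas π)
  obtain ⟨π₀, hπ₀, hmax⟩ := hopt
  obtain ⟨π, hπ, hle, hmono⟩ := (convex_setOf_isDualFeasible ρ).exists_fiberwise_monotone_mem
    (fun τ hτ _ hx => IsDualFeasible.comp_perm hx (mem_fiberPerms.1 hτ)) d hπ₀
  exact ⟨π, hπ, fun π' hπ' => (hmax π' hπ').trans hle, hmono⟩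
end

section
/- Suppose the links are partitioned into K clusters with multi-cluster cardinality-based rates, and suppose for every inter-cluster group c (a group intersecting at least two clusters) and every cluster j intersecting c, the single-link rate R_j of cluster j satisfies R_j ≥ ∑_{j'} r^{j'}_{g(c)} |c_{j'}| (the sum-rate of c). Then replacing c (run for time t_c) by single-link activations of each link in c, with link durations r^j_{g(c)} t_c / R_j for links of cluster j, empties the same demand and uses total time ∑_j |c_j| r^j_{g(c)} t_c / R_j ≤ t_c. -/
/-!
The link of cluster `j` needs time `r^j t / R_j` to deliver what it delivered in the group, so
the single-link schedule takes `(∑_j w_j / R_j) t` with `w_j = r^j |c_j|`. Every cluster that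
actually carries weight has `R_j ≥ S := ∑_j w_j`, so `∑_j w_j / R_j ≤ ∑_j w_j / S = 1`.
-/

theorem Finset.sum_div_le_one_of_sum_le {ι : Type*} (s : Finset ι) (w R : ι → ℝ)
    (hw : ∀ j ∈ s, 0 ≤ w j) (hR : ∀ j ∈ s, w j ≠ 0 → ∑ i ∈ s, w i ≤ R j) :
    ∑ j ∈ s, w j / R j ≤ 1 := by
  set S := ∑ i ∈ s, w i
  have hterm : ∀ j ∈ s, w j / R j ≤ w j / S := by
    intro j hj
    rcases eq_or_ne (w j) 0 with hwj | hwj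
    · simp [hwj]
    · have hS : 0 < S :=
        lt_of_lt_of_le ((hw j hj).lt_of_ne' hwj) (Finset.single_le_sum hw hj)
      exact div_le_div_of_nonneg_left (hw j hj) hS (hR j hj hwj)
  calc ∑ j ∈ s, w j / R j ≤ ∑ j ∈ s, w j / S := Finset.sum_le_sum hterm
    _ = S / S := (Finset.sum_div s w S).symm
    _ ≤ 1 := div_self_le_one S

theorem stmt_9_general (K : ℕ) (r : Fin K → ℝ) (hr : ∀ j, 0 ≤ r j)
    (m : Fin K → ℕ)
    (R : Fin K → ℝ) (hR : ∀ j, 0 < R j)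
    (hdom : ∀ j, m j ≠ 0 → (∑ j', r j' * (m j' : ℝ)) ≤ R j)
    (t : ℝ) (ht : 0 ≤ t) :
    (∀ j, R j * (r j * t / R j) = r j * t) ∧
    (∑ j, (m j : ℝ) * (r j * t / R j)) ≤ t := by
  refine ⟨fun j => mul_div_cancel₀ _ (hR j).ne', ?_⟩
  have hload : ∑ j, r j * (m j : ℝ) / R j ≤ 1 :=
    Finset.sum_div_le_one_of_sum_le _ _ _
      (fun j _ => mul_nonneg (hr j) (Nat.cast_nonneg _))
      (fun j _ hj => hdom j (Nat.cast_ne_zero.mp (right_ne_zero_of_mul hj)))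
  calc ∑ j, (m j : ℝ) * (r j * t / R j) = (∑ j, r j * (m j : ℝ) / R j) * t := by
        rw [Finset.sum_mul]
        exact Finset.sum_congr rfl fun j _ => by ring
    _ ≤ t := mul_le_of_le_one_left ht hload

/-- Replacing an inter-cluster group c (run for time t) by single-link
activations of duration r^j t / R_j per cluster-j link empties the same demand, and
the total time ∑_j |c_j| r^j t / R_j is at most t, provided each single-link rate
R_j dominates the sum-rate of c. -/
theorem stmt_9 (K : ℕ) (r : Fin K → ℝ) (hr : ∀ j, 0 ≤ r j)
    (m : Fin K → ℕ)
    (hinter : 1 < (Finset.univ.filter (fun j => m j ≠ 0)).card)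
    (R : Fin K → ℝ) (hR : ∀ j, 0 < R j)
    (hdom : ∀ j, m j ≠ 0 → (∑ j', r j' * (m j' : ℝ)) ≤ R j)
    (t : ℝ) (ht : 0 ≤ t) :
    (∀ j, R j * (r j * t / R j) = r j * t) ∧
    (∑ j, (m j : ℝ) * (r j * t / R j)) ≤ t :=
  stmt_9_general K r hr m R hR hdom t ht
end

section
/- Under the hypothesis that for every cluster j the single-link rate R_j is at least the sum-rate of every inter-cluster group, the MTSP with multi-cluster cardinality-based rates admits an optimal schedule using only intra-cluster groups (groups whose links all lie in a single cluster). -/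
/-!
Let `R i` be the single-link rate of link `i`. A group `c` active for time `x` can be replaced
by the singletons `{i}`, `i ∈ c`, each active for `r i c * x / R i`: every link is served exactly
as before, and when `c` is inter-cluster the dominance hypothesis `∑ l ∈ c, r l c ≤ R i` bounds the
new total time `∑ i ∈ c, r i c * x / R i` by `x`. An optimal schedule exists, since the feasible
set is closed, nonempty (singletons alone can serve any demand) and meets every sublevel set of the
total time in a compact set; performing the replacement on all its inter-cluster groups gives an
intra-cluster schedule that is still optimal.
-/

open Finset Matrix

theorem exists_isMinOn_sum_of_isClosed {ι : Type*} [Fintype ι] {S : Set (ι → ℝ)}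
    (hS : IsClosed S) (hne : S.Nonempty) (hnonneg : ∀ t ∈ S, 0 ≤ t) :
    ∃ t ∈ S, IsMinOn (fun t => ∑ i, t i) S t := by
  obtain ⟨t₀, ht₀⟩ := hne
  have hsum : Continuous fun t : ι → ℝ => ∑ i, t i := by fun_prop
  have hcompact : IsCompact (S ∩ {t | ∑ i, t i ≤ ∑ i, t₀ i}) := by
    refine (isCompact_univ_pi fun _ => isCompact_Icc (a := 0) (b := ∑ i, t₀ i)).of_isClosed_subset
      (hS.inter (isClosed_le hsum continuous_const)) ?_
    rintro t ⟨htS, hle⟩ i -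
    exact ⟨hnonneg t htS i, (single_le_sum (fun j _ => hnonneg t htS j) (mem_univ i)).trans hle⟩
  obtain ⟨t, ⟨htS, htle⟩, hmin⟩ :=
    hcompact.exists_isMinOn ⟨t₀, ht₀, le_refl (∑ i, t₀ i)⟩ hsum.continuousOn
  refine ⟨t, htS, fun s hs => ?_⟩
  by_cases hle : ∑ i, s i ≤ ∑ i, t₀ i
  · exact hmin ⟨hs, hle⟩
  · exact htle.trans (not_le.1 hle).le

namespace MTSP

variable {ι : Type*} [DecidableEq ι]

/-- Entry `(i, c)` is the rate at which link `i` is served while group `c` is active, so that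
`rateMatrix r *ᵥ t` is the demand served by the schedule `t`. -/
def rateMatrix (r : ι → Finset ι → ℝ) : Matrix ι (Finset ι) ℝ :=
  fun i c => if i ∈ c then r i c else 0

noncomputable def splitSchedule (r : ι → Finset ι → ℝ) (c : Finset ι) (x : ℝ) :
    Finset ι → ℝ :=
  ∑ i ∈ c, Pi.single {i} (r i c * x / r i {i})

theorem splitSchedule_nonneg {r : ι → Finset ι → ℝ} {c : Finset ι} (hr : ∀ i ∈ c, 0 ≤ r i c)
    (hR : ∀ i ∈ c, 0 ≤ r i {i}) {x : ℝ} (hx : 0 ≤ x) : 0 ≤ splitSchedule r c x :=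
  sum_nonneg fun i hi => Pi.single_nonneg.2 (div_nonneg (mul_nonneg (hr i hi) hx) (hR i hi))

theorem exists_eq_singleton_of_splitSchedule_ne_zero {r : ι → Finset ι → ℝ} {c c' : Finset ι}
    {x : ℝ} (h : splitSchedule r c x c' ≠ 0) : ∃ i, c' = {i} := by
  rw [splitSchedule, Finset.sum_apply] at h
  obtain ⟨i, -, hi⟩ := exists_ne_zero_of_sum_ne_zero h
  exact ⟨i, by_contra fun hne => hi (Pi.single_eq_of_ne hne _)⟩

variable [Fintype ι]

def feasibleSet (r : ι → Finset ι → ℝ) (d : ι → ℝ) : Set (Finset ι → ℝ) :=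
  {t | 0 ≤ t ∧ rateMatrix r *ᵥ t = d}

noncomputable def replaceSchedule (r : ι → Finset ι → ℝ) (p : Finset ι → Prop) [DecidablePred p]
    (t : Finset ι → ℝ) : Finset ι → ℝ :=
  ∑ c, if p c then Pi.single c (t c) else splitSchedule r c (t c)

variable {r : ι → Finset ι → ℝ}

theorem rateMatrix_mulVec_apply (t : Finset ι → ℝ) (i : ι) :
    (rateMatrix r *ᵥ t) i = ∑ c, if i ∈ c then r i c * t c else 0 := by
  simp only [mulVec, dotProduct, rateMatrix, ite_mul, zero_mul]

theorem rateMatrix_mulVec_single (c : Finset ι) (x : ℝ) :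
    rateMatrix r *ᵥ Pi.single c x = ∑ i ∈ c, Pi.single i (r i c * x) := by
  ext l
  rw [mulVec_single, Finset.sum_apply, Finset.sum_pi_single]
  simp [rateMatrix]

theorem isClosed_feasibleSet (d : ι → ℝ) : IsClosed (feasibleSet r d) :=
  (isClosed_le continuous_const continuous_id).inter
    (isClosed_eq (continuous_const.matrix_mulVec continuous_id) continuous_const)

theorem feasibleSet_nonempty {d : ι → ℝ} (hd : 0 ≤ d) (hR : ∀ i, 0 < r i {i}) :
    (feasibleSet r d).Nonempty := by
  refine ⟨∑ i, Pi.single {i} (d i / r i {i}), sum_nonneg fun i _ => ?_, ?_⟩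
  · exact Pi.single_nonneg.2 (div_nonneg (hd i) (hR i).le)
  · simp only [mulVec_sum, rateMatrix_mulVec_single, sum_singleton,
      mul_div_cancel₀ _ (hR _).ne', univ_sum_single]

theorem rateMatrix_mulVec_splitSchedule {c : Finset ι} (hR : ∀ i ∈ c, r i {i} ≠ 0) (x : ℝ) :
    rateMatrix r *ᵥ splitSchedule r c x = rateMatrix r *ᵥ Pi.single c x := by
  simp only [splitSchedule, mulVec_sum, rateMatrix_mulVec_single, sum_singleton]
  exact sum_congr rfl fun i hi => by rw [mul_div_cancel₀ _ (hR i hi)]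

theorem sum_splitSchedule_le {c : Finset ι} (hr : ∀ i ∈ c, 0 ≤ r i c)
    (hdom : ∀ i ∈ c, ∑ l ∈ c, r l c ≤ r i {i}) {x : ℝ} (hx : 0 ≤ x) :
    ∑ c', splitSchedule r c x c' ≤ x := by
  have hsum : ∑ c', splitSchedule r c x c' = ∑ i ∈ c, r i c * x / r i {i} := by
    simp only [splitSchedule, Finset.sum_apply]
    rw [sum_comm]
    simp
  rw [hsum]
  rcases (sum_nonneg hr).eq_or_lt with hS | hS
  · rw [sum_eq_zero fun i hi => by rw [(sum_eq_zero_iff_of_nonneg hr).1 hS.symm i hi]; simp]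
    exact hx
  · calc ∑ i ∈ c, r i c * x / r i {i} ≤ ∑ i ∈ c, r i c * x / ∑ l ∈ c, r l c :=
          sum_le_sum fun i hi => div_le_div_of_nonneg_left (mul_nonneg (hr i hi) hx) hS (hdom i hi)
      _ = x := by rw [← sum_div, ← sum_mul, mul_div_cancel_left₀ _ hS.ne']

variable {p : Finset ι → Prop} [DecidablePred p]

theorem rateMatrix_mulVec_replaceSchedule (hR : ∀ i, r i {i} ≠ 0) (t : Finset ι → ℝ) :
    rateMatrix r *ᵥ replaceSchedule r p t = rateMatrix r *ᵥ t := by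
  conv_rhs => rw [← univ_sum_single t]
  simp only [replaceSchedule, mulVec_sum, apply_ite (rateMatrix r *ᵥ ·),
    rateMatrix_mulVec_splitSchedule fun i _ => hR i, ite_self]

theorem replaceSchedule_nonneg (hr : ∀ i c, 0 ≤ r i c) {t : Finset ι → ℝ} (ht : 0 ≤ t) :
    0 ≤ replaceSchedule r p t := by
  refine sum_nonneg fun c _ => ?_
  split_ifs
  · exact Pi.single_nonneg.2 (ht c)
  · exact splitSchedule_nonneg (fun i _ => hr i c) (fun i _ => hr i {i}) (ht c)

theorem of_replaceSchedule_ne_zero (hp : ∀ i, p {i}) {t : Finset ι → ℝ} {c' : Finset ι}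
    (h : replaceSchedule r p t c' ≠ 0) : p c' := by
  by_contra hc'
  apply h
  rw [replaceSchedule, Finset.sum_apply]
  refine sum_eq_zero fun c _ => ?_
  split_ifs with hc
  · exact Pi.single_eq_of_ne (fun he : c' = c => hc' (he ▸ hc)) _
  · by_contra hne
    obtain ⟨i, rfl⟩ := exists_eq_singleton_of_splitSchedule_ne_zero hne
    exact hc' (hp i)

theorem sum_replaceSchedule_le (hr : ∀ i c, 0 ≤ r i c)
    (hdom : ∀ c, ¬ p c → ∀ i ∈ c, ∑ l ∈ c, r l c ≤ r i {i}) {t : Finset ι → ℝ} (ht : 0 ≤ t) :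
    ∑ c', replaceSchedule r p t c' ≤ ∑ c, t c := by
  simp only [replaceSchedule, Finset.sum_apply]
  rw [sum_comm]
  refine sum_le_sum fun c _ => ?_
  split_ifs with hc
  · simp
  · exact sum_splitSchedule_le (fun i _ => hr i c) (hdom c hc) (ht c)

end MTSP

open MTSP

/-- If every cluster's single-link rate dominates the sum-rate of every
inter-cluster group, the MTSP with multi-cluster cardinality-based rates admits an
optimal schedule using only intra-cluster groups. -/
theorem stmt_10 (N K : ℕ) (cluster : Fin N → Fin K)
    (d : Fin N → ℝ) (hd : ∀ i, 0 ≤ d i)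
    (ρ : Fin K → (Fin K → ℕ) → ℝ) (hρ : ∀ j v, 0 ≤ ρ j v)
    (g : Finset (Fin N) → Fin K → ℕ)
    (hg : ∀ c j, g c j = (c.filter (fun i => cluster i = j)).card)
    (hRpos : ∀ j, 0 < ρ j (fun j' => if j' = j then 1 else 0))
    (hdom : ∀ j, ∀ c : Finset (Fin N), c.Nonempty →
      (∃ i ∈ c, ∃ l ∈ c, cluster i ≠ cluster l) →
      (∑ i ∈ c, ρ (cluster i) (g c)) ≤ ρ j (fun j' => if j' = j then 1 else 0)) :
    ∃ t : Finset (Fin N) → ℝ, (∀ c, 0 ≤ t c) ∧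
      (∀ i, ∑ c : Finset (Fin N), (if i ∈ c then ρ (cluster i) (g c) * t c else 0) = d i) ∧
      (∀ c, t c ≠ 0 → ∀ i ∈ c, ∀ l ∈ c, cluster i = cluster l) ∧
      (∀ t' : Finset (Fin N) → ℝ, (∀ c, 0 ≤ t' c) →
        (∀ i, ∑ c : Finset (Fin N), (if i ∈ c then ρ (cluster i) (g c) * t' c else 0) = d i) →
        (∑ c : Finset (Fin N), t c) ≤ ∑ c : Finset (Fin N), t' c) := by
  classical
  set r : Fin N → Finset (Fin N) → ℝ := fun i c => ρ (cluster i) (g c)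
  set intra : Finset (Fin N) → Prop := fun c => ∀ i ∈ c, ∀ l ∈ c, cluster i = cluster l
  have hR : ∀ i, r i {i} = ρ (cluster i) (fun j => if j = cluster i then 1 else 0) := by
    intro i
    show ρ (cluster i) (g {i}) = _
    congr 1
    funext j
    rw [hg, filter_singleton]
    split_ifs <;> simp_all
  have hdom' : ∀ c, ¬ intra c → ∀ i ∈ c, ∑ l ∈ c, r l c ≤ r i {i} := by
    intro c hc i hi
    rw [hR]
    exact hdom _ c ⟨i, hi⟩ (by simpa [intra] using hc)
  have hfeasible : ∀ t, (∀ i, ∑ c, (if i ∈ c then ρ (cluster i) (g c) * t c else 0) = d i) ↔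
      rateMatrix r *ᵥ t = d := by
    simp [funext_iff, rateMatrix_mulVec_apply, r]
  obtain ⟨t, ⟨ht0, htd⟩, hmin⟩ := exists_isMinOn_sum_of_isClosed (isClosed_feasibleSet d)
    (feasibleSet_nonempty (fun i => hd i) fun i => hR i ▸ hRpos _) fun _ h => h.1
  refine ⟨replaceSchedule r intra t, replaceSchedule_nonneg (fun _ _ => hρ _ _) ht0,
    (hfeasible _).2 <|
      (rateMatrix_mulVec_replaceSchedule (fun i => hR i ▸ (hRpos _).ne') t).trans htd,
    fun c hc => of_replaceSchedule_ne_zero (fun i => by simp [intra]) hc,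
    fun t' ht'0 ht'd => (sum_replaceSchedule_le (fun _ _ => hρ _ _) hdom' ht0).trans
      (hmin ⟨fun c => ht'0 c, (hfeasible t').1 ht'd⟩)⟩
end

section
/- Suppose demands are uniform within each cluster and for every inter-cluster group c there exist, for each cluster j intersecting c, intra-cluster group cardinalities ℓ_j whose sum-rate (ℓ_j times the common rate at cardinality ℓ_j) is at least the sum-rate of c. Then the MTSP with multi-cluster cardinality-based rates admits an optimal schedule consisting only of intra-cluster groups. -/
/-!
The problem is a linear program, and the proof exhibits a primal solution together with a dual
certificate. For each cluster `j` with `n_j` links let `L_j ∈ [1, n_j]` maximise the intra-cluster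
sum-rate `ℓ ρ_j(ℓ)`, with maximum `M_j`. Give each `L_j`-subset of cluster `j` the same time
`D_j / (ρ_j(L_j) · C(n_j - 1, L_j - 1))`: every link of the cluster lies in `C(n_j - 1, L_j - 1)`
of these groups, so it receives exactly its demand. The dual weights `1 / M_j` of the links of
cluster `j` are feasible because the sum-rate of any group `c` is at most `M_j` for every cluster
`j` meeting `c` (by maximality for intra-cluster groups and by the dominance hypothesis for the
others), and the intra-cluster schedule uses only groups on which the dual constraint is tight.
-/

open Finset

section LinearProgram

variable {ι : Type*} [Fintype ι] [DecidableEq ι]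

/-- `r i c` is the rate of link `i` while group `c` is active. -/
def IsSchedule (r : ι → Finset ι → ℝ) (d : ι → ℝ) (t : Finset ι → ℝ) : Prop :=
  (∀ c, 0 ≤ t c) ∧ ∀ i, ∑ c, (if i ∈ c then r i c * t c else 0) = d i

namespace IsSchedule

variable {r : ι → Finset ι → ℝ} {d : ι → ℝ} {t t' : Finset ι → ℝ}

theorem sum_mul_demand (ht : IsSchedule r d t) (y : ι → ℝ) :
    ∑ i, y i * d i = ∑ c, t c * ∑ i ∈ c, y i * r i c := by
  simp_rw [← ht.2, mul_sum, mul_ite, mul_zero]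
  rw [sum_comm]
  refine sum_congr rfl fun c _ => ?_
  rw [sum_ite_mem, univ_inter]
  exact sum_congr rfl fun i _ => by ring

theorem sum_mul_demand_le_sum (ht : IsSchedule r d t) {y : ι → ℝ}
    (hy : ∀ c, ∑ i ∈ c, y i * r i c ≤ 1) : ∑ i, y i * d i ≤ ∑ c, t c := by
  rw [ht.sum_mul_demand y]
  exact sum_le_sum fun c _ => mul_le_of_le_one_right (ht.1 c) (hy c)

theorem sum_eq_sum_mul_demand (ht : IsSchedule r d t) {y : ι → ℝ}
    (hy : ∀ c, t c ≠ 0 → ∑ i ∈ c, y i * r i c = 1) : ∑ c, t c = ∑ i, y i * d i := by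
  rw [ht.sum_mul_demand y]
  refine sum_congr rfl fun c _ => ?_
  by_cases hc : t c = 0
  · simp [hc]
  · rw [hy c hc, mul_one]

theorem sum_le_of_dual (ht : IsSchedule r d t) {y : ι → ℝ}
    (hdual : ∀ c, ∑ i ∈ c, y i * r i c ≤ 1) (hslack : ∀ c, t c ≠ 0 → ∑ i ∈ c, y i * r i c = 1)
    (ht' : IsSchedule r d t') : ∑ c, t c ≤ ∑ c, t' c :=
  (ht.sum_eq_sum_mul_demand hslack).trans_le (ht'.sum_mul_demand_le_sum hdual)

theorem demand_eq_zero (ht : IsSchedule r d t) {i : ι} (hr : ∀ c, i ∈ c → r i c = 0) :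
    d i = 0 := by
  rw [← ht.2 i]
  refine sum_eq_zero fun c _ => ?_
  split_ifs with hi
  · rw [hr c hi, zero_mul]
  · rfl

end IsSchedule

end LinearProgram

theorem sum_inv_mul_le_one {α : Type*} {s : Finset α} {r M : α → ℝ} (hr : ∀ i ∈ s, 0 ≤ r i)
    (hM : ∀ i ∈ s, ∑ k ∈ s, r k ≤ M i) : ∑ i ∈ s, (M i)⁻¹ * r i ≤ 1 := by
  rcases (sum_nonneg hr).eq_or_lt with hzero | hpos
  · have hr0 := (sum_eq_zero_iff_of_nonneg hr).1 hzero.symm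
    rw [sum_eq_zero fun i hi => by rw [hr0 i hi, mul_zero]]
    exact zero_le_one
  · calc ∑ i ∈ s, (M i)⁻¹ * r i
        ≤ ∑ i ∈ s, r i / ∑ k ∈ s, r k := sum_le_sum fun i hi => by
          rw [inv_mul_eq_div]; exact div_le_div_of_nonneg_left (hr i hi) hpos (hM i hi)
      _ = 1 := by rw [← sum_div, div_self hpos.ne']

theorem exists_mem_Icc_forall_le (f : ℕ → ℝ) (n : ℕ) :
    ∃ L ∈ Icc 1 (max n 1), ∀ m ∈ Icc 1 n, f m ≤ f L := by
  obtain ⟨L, hL, hmax⟩ := exists_max_image (Icc 1 (max n 1)) f ⟨1, by simp⟩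
  exact ⟨L, hL, fun m hm => hmax m (Icc_subset_Icc_right (le_max_left n 1) hm)⟩

theorem exists_nonneg_comp_eq {ι κ : Type*} {cluster : ι → κ} {d : ι → ℝ} (hd : ∀ i, 0 ≤ d i)
    (hunif : ∀ i l, cluster i = cluster l → d i = d l) :
    ∃ D : κ → ℝ, (∀ j, 0 ≤ D j) ∧ d = D ∘ cluster := by
  classical
  have hfac : d.FactorsThrough cluster := fun i l h => hunif i l h
  refine ⟨Function.extend cluster d 0, fun j => ?_, funext fun i => (hfac.extend_apply 0 i).symm⟩
  by_cases hj : ∃ i, cluster i = j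
  · obtain ⟨i, rfl⟩ := hj
    rw [hfac.extend_apply]
    exact hd i
  · rw [Function.extend_apply' _ _ _ hj]
    rfl

section Clusters

variable {ι κ : Type*} [Fintype ι] [DecidableEq κ] (cluster : ι → κ)
  (ρ : κ → (κ → ℕ) → ℝ)

def clusterMembers (j : κ) : Finset ι := {i | cluster i = j}

def clusterCount (c : Finset ι) : κ → ℕ := fun j => #(c.filter (fun i => cluster i = j))

def groupRate (i : ι) (c : Finset ι) : ℝ := ρ (cluster i) (clusterCount cluster c)

/-- The common rate `ρ_j(ℓ)` of an intra-cluster group of cluster `j` with `ℓ` links. -/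
def intraRate (j : κ) (ℓ : ℕ) : ℝ := ρ j (fun j' => if j' = j then ℓ else 0)

def intraSumRate (j : κ) (ℓ : ℕ) : ℝ := ℓ * intraRate ρ j ℓ

def InterGroupsDominated : Prop :=
  ∀ c : Finset ι, c.Nonempty → (∃ i ∈ c, ∃ l ∈ c, cluster i ≠ cluster l) →
    ∀ j, (c.filter (fun i => cluster i = j)).Nonempty →
      ∃ ℓ : ℕ, 1 ≤ ℓ ∧ ℓ ≤ #(clusterMembers cluster j) ∧
        ∑ i ∈ c, groupRate cluster ρ i c ≤ intraSumRate ρ j ℓ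

variable {cluster ρ}

@[simp]
theorem mem_clusterMembers {i : ι} {j : κ} : i ∈ clusterMembers cluster j ↔ cluster i = j := by
  simp [clusterMembers]

theorem clusterCount_of_subset {c : Finset ι} {j : κ} (hc : c ⊆ clusterMembers cluster j) :
    clusterCount cluster c = fun j' => if j' = j then #c else 0 := by
  funext j'
  split_ifs with hj
  · subst hj
    exact congrArg card (filter_true_of_mem fun i hi => mem_clusterMembers.1 (hc hi))
  · refine card_eq_zero.2 (filter_eq_empty_iff.2 fun i hi hij => hj ?_)
    rw [← hij, mem_clusterMembers.1 (hc hi)]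

theorem groupRate_of_subset {c : Finset ι} {j : κ} (hc : c ⊆ clusterMembers cluster j) {i : ι}
    (hi : i ∈ c) : groupRate cluster ρ i c = intraRate ρ j #c := by
  rw [groupRate, clusterCount_of_subset hc, mem_clusterMembers.1 (hc hi), intraRate]

theorem sum_groupRate_of_subset {c : Finset ι} {j : κ} (hc : c ⊆ clusterMembers cluster j) :
    ∑ i ∈ c, groupRate cluster ρ i c = intraSumRate ρ j #c := by
  rw [sum_congr rfl fun i hi => groupRate_of_subset hc hi, sum_const, nsmul_eq_mul,
    intraSumRate]

theorem sum_groupRate_le (hdom : InterGroupsDominated cluster ρ) {j : κ} {M : ℝ}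
    (hM : ∀ m ∈ Icc 1 #(clusterMembers cluster j), intraSumRate ρ j m ≤ M) {c : Finset ι}
    {i : ι} (hi : i ∈ c) (hij : cluster i = j) : ∑ k ∈ c, groupRate cluster ρ k c ≤ M := by
  by_cases hintra : ∀ k ∈ c, cluster k = j
  · have hc : c ⊆ clusterMembers cluster j := fun k hk => mem_clusterMembers.2 (hintra k hk)
    rw [sum_groupRate_of_subset hc]
    exact hM _ (mem_Icc.2 ⟨card_pos.2 ⟨i, hi⟩, card_le_card hc⟩)
  · obtain ⟨k, hk, hkj⟩ : ∃ k ∈ c, cluster k ≠ j := by simpa using hintra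
    obtain ⟨ℓ, hℓ1, hℓn, hle⟩ := hdom c ⟨i, hi⟩ ⟨i, hi, k, hk, hij.trans_ne hkj.symm⟩ j
      ⟨i, mem_filter.2 ⟨hi, hij⟩⟩
    exact hle.trans (hM ℓ (mem_Icc.2 ⟨hℓ1, hℓn⟩))

theorem sum_inv_intraSumRate_mul_groupRate_le_one (hρ : ∀ j v, 0 ≤ ρ j v)
    (hdom : InterGroupsDominated cluster ρ) {L : κ → ℕ}
    (hmax : ∀ j, ∀ m ∈ Icc 1 #(clusterMembers cluster j),
      intraSumRate ρ j m ≤ intraSumRate ρ j (L j))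
    (c : Finset ι) :
    ∑ i ∈ c, (intraSumRate ρ (cluster i) (L (cluster i)))⁻¹ * groupRate cluster ρ i c ≤ 1 :=
  sum_inv_mul_le_one (fun _ _ => hρ _ _) fun _ hi => sum_groupRate_le hdom (hmax _) hi rfl

theorem IsSchedule.demand_eq_zero_of_intraRate_eq_zero [DecidableEq ι] {d : ι → ℝ}
    {t : Finset ι → ℝ} (ht : IsSchedule (groupRate cluster ρ) d t) (hρ : ∀ j v, 0 ≤ ρ j v)
    (hdom : InterGroupsDominated cluster ρ) {L : κ → ℕ}
    (hmax : ∀ j, ∀ m ∈ Icc 1 #(clusterMembers cluster j),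
      intraSumRate ρ j m ≤ intraSumRate ρ j (L j))
    {i : ι} (hi : intraRate ρ (cluster i) (L (cluster i)) = 0) : d i = 0 := by
  refine ht.demand_eq_zero fun c hic => le_antisymm ?_ (hρ _ _)
  calc groupRate cluster ρ i c ≤ ∑ k ∈ c, groupRate cluster ρ k c :=
        single_le_sum (fun _ _ => hρ _ _) hic
    _ ≤ intraSumRate ρ (cluster i) (L (cluster i)) := sum_groupRate_le hdom (hmax _) hic rfl
    _ = 0 := by rw [intraSumRate, hi, mul_zero]

end Clusters

section IntraClusterSchedule

variable {ι κ : Type*} [Fintype ι] [DecidableEq ι] [Fintype κ] [DecidableEq κ]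
  {cluster : ι → κ} {ρ : κ → (κ → ℕ) → ℝ} {L : κ → ℕ} {D : κ → ℝ}

noncomputable section

variable (cluster ρ L D)

/-- Each link of cluster `j` lies in `C(n_j - 1, L_j - 1)` of its `L_j`-subsets. -/
def intraTime (j : κ) : ℝ :=
  D j / (intraRate ρ j (L j) * ((#(clusterMembers cluster j) - 1).choose (L j - 1) : ℕ))

def intraSchedule (c : Finset ι) : ℝ :=
  ∑ j, if c ∈ (clusterMembers cluster j).powersetCard (L j) then intraTime cluster ρ L D j else 0

end

theorem card_filter_mem_powersetCard {α : Type*} [DecidableEq α] {s : Finset α} {a : α}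
    (ha : a ∈ s) {k : ℕ} (hk : 1 ≤ k) :
    #((s.powersetCard k).filter (fun c => a ∈ c)) = (#s - 1).choose (k - 1) := by
  simpa [singleton_subset_iff] using
    card_filter_powersetCard_subset {a} s k (singleton_subset_iff.2 ha) (by simpa using hk)

theorem intraSchedule_of_mem {c : Finset ι} {i : ι} (hi : i ∈ c) :
    intraSchedule cluster ρ L D c =
      if c ∈ (clusterMembers cluster (cluster i)).powersetCard (L (cluster i)) then
        intraTime cluster ρ L D (cluster i) else 0 := by
  refine sum_eq_single (cluster i) (fun j _ hj => if_neg fun hc => hj ?_) (by simp)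
  exact (mem_clusterMembers.1 ((mem_powersetCard.1 hc).1 hi)).symm

theorem exists_of_intraSchedule_ne_zero {c : Finset ι} (hc : intraSchedule cluster ρ L D c ≠ 0) :
    ∃ j, c ∈ (clusterMembers cluster j).powersetCard (L j) ∧ intraTime cluster ρ L D j ≠ 0 := by
  obtain ⟨j, -, hj⟩ := exists_ne_zero_of_sum_ne_zero hc
  by_cases hcj : c ∈ (clusterMembers cluster j).powersetCard (L j)
  · exact ⟨j, hcj, by rwa [if_pos hcj] at hj⟩
  · exact absurd (if_neg hcj) hj

theorem intraSchedule_support {c : Finset ι} (hc : intraSchedule cluster ρ L D c ≠ 0) :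
    ∀ i ∈ c, ∀ l ∈ c, cluster i = cluster l := by
  obtain ⟨j, hcj, -⟩ := exists_of_intraSchedule_ne_zero hc
  intro i hi l hl
  have hsub := (mem_powersetCard.1 hcj).1
  rw [mem_clusterMembers.1 (hsub hi), mem_clusterMembers.1 (hsub hl)]

theorem sum_groupRate_mul_intraSchedule (hL : ∀ j, 1 ≤ L j) (i : ι) :
    ∑ c, (if i ∈ c then groupRate cluster ρ i c * intraSchedule cluster ρ L D c else 0) =
      ((#(clusterMembers cluster (cluster i)) - 1).choose (L (cluster i) - 1) : ℕ) *
        (intraRate ρ (cluster i) (L (cluster i)) * intraTime cluster ρ L D (cluster i)) := by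
  have hi : i ∈ clusterMembers cluster (cluster i) := mem_clusterMembers.2 rfl
  generalize hj : cluster i = j at hi ⊢
  set P := (clusterMembers cluster j).powersetCard (L j)
  have hterm : ∀ c, (if i ∈ c then groupRate cluster ρ i c * intraSchedule cluster ρ L D c else 0)
      = if c ∈ P.filter (fun c => i ∈ c) then intraRate ρ j (L j) * intraTime cluster ρ L D j
        else 0 := by
    intro c
    by_cases hi : i ∈ c
    · rw [if_pos hi, intraSchedule_of_mem hi, hj]
      by_cases hcP : c ∈ P
      · obtain ⟨hsub, hcard⟩ := mem_powersetCard.1 hcP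
        rw [if_pos hcP, if_pos (mem_filter.2 ⟨hcP, hi⟩), groupRate_of_subset hsub hi, hcard]
      · rw [if_neg hcP, if_neg fun h => hcP (mem_filter.1 h).1, mul_zero]
    · simp [hi]
  rw [sum_congr rfl fun c _ => hterm c, sum_ite_mem, univ_inter, sum_const, nsmul_eq_mul,
    card_filter_mem_powersetCard hi (hL j)]

theorem isSchedule_intraSchedule (hρ : ∀ j v, 0 ≤ ρ j v) (hD : ∀ j, 0 ≤ D j)
    (hL : ∀ j, 1 ≤ L j) (hLn : ∀ i, L (cluster i) ≤ #(clusterMembers cluster (cluster i)))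
    (hzero : ∀ i, intraRate ρ (cluster i) (L (cluster i)) = 0 → D (cluster i) = 0) :
    IsSchedule (groupRate cluster ρ) (D ∘ cluster) (intraSchedule cluster ρ L D) := by
  refine ⟨fun c => sum_nonneg fun j _ => ?_, fun i => ?_⟩
  · split_ifs
    · exact div_nonneg (hD j) (mul_nonneg (hρ _ _) (Nat.cast_nonneg _))
    · exact le_rfl
  have hC : ((#(clusterMembers cluster (cluster i)) - 1).choose (L (cluster i) - 1) : ℝ) ≠ 0 :=
    Nat.cast_ne_zero.2 (Nat.choose_pos (Nat.sub_le_sub_right (hLn i) 1)).ne'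
  rw [sum_groupRate_mul_intraSchedule hL, Function.comp_apply, intraTime]
  by_cases hρ0 : intraRate ρ (cluster i) (L (cluster i)) = 0
  · simp [hρ0, hzero i hρ0]
  · field_simp

theorem sum_inv_intraSumRate_mul_groupRate_eq_one (hL : ∀ j, 1 ≤ L j) {c : Finset ι}
    (hc : intraSchedule cluster ρ L D c ≠ 0) :
    ∑ i ∈ c, (intraSumRate ρ (cluster i) (L (cluster i)))⁻¹ * groupRate cluster ρ i c = 1 := by
  obtain ⟨j, hcj, hτ⟩ := exists_of_intraSchedule_ne_zero hc
  obtain ⟨hsub, hcard⟩ := mem_powersetCard.1 hcj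
  have hρ0 : intraRate ρ j (L j) ≠ 0 := fun h => hτ (by simp [intraTime, h])
  have hL0 : (L j : ℝ) ≠ 0 := Nat.cast_ne_zero.2 (Nat.one_le_iff_ne_zero.1 (hL j))
  rw [sum_congr rfl fun i hi => by
      rw [mem_clusterMembers.1 (hsub hi), groupRate_of_subset hsub hi, hcard],
    sum_const, hcard, nsmul_eq_mul, intraSumRate]
  field_simp

theorem exists_optimal_intraCluster_schedule (hρ : ∀ j v, 0 ≤ ρ j v)
    (hdom : InterGroupsDominated cluster ρ) (hD : ∀ j, 0 ≤ D j)
    (hfeas : ∃ t, IsSchedule (groupRate cluster ρ) (D ∘ cluster) t) :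
    ∃ t, IsSchedule (groupRate cluster ρ) (D ∘ cluster) t ∧
      (∀ c, t c ≠ 0 → ∀ i ∈ c, ∀ l ∈ c, cluster i = cluster l) ∧
      ∀ t', IsSchedule (groupRate cluster ρ) (D ∘ cluster) t' → ∑ c, t c ≤ ∑ c, t' c := by
  choose L hL hmax using fun j => exists_mem_Icc_forall_le (intraSumRate ρ j)
    #(clusterMembers cluster j)
  obtain ⟨t₀, ht₀⟩ := hfeas
  have hLn (i : ι) : L (cluster i) ≤ #(clusterMembers cluster (cluster i)) := by
    have hpos : 1 ≤ #(clusterMembers cluster (cluster i)) := card_pos.2 ⟨i, by simp⟩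
    simpa [hpos] using (mem_Icc.1 (hL (cluster i))).2
  have hsched := isSchedule_intraSchedule hρ hD (fun j => (mem_Icc.1 (hL j)).1) hLn
    fun i => ht₀.demand_eq_zero_of_intraRate_eq_zero hρ hdom hmax
  exact ⟨_, hsched, fun c => intraSchedule_support, fun t' ht' => hsched.sum_le_of_dual
    (sum_inv_intraSumRate_mul_groupRate_le_one hρ hdom hmax)
    (fun c => sum_inv_intraSumRate_mul_groupRate_eq_one fun j => (mem_Icc.1 (hL j)).1) ht'⟩

end IntraClusterSchedule

/-- With uniform demands within each cluster, if for every
inter-cluster group c and each cluster j intersecting c there is an intra-cluster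
cardinality ℓ whose sum-rate dominates the sum-rate of c, then the MTSP with
multi-cluster cardinality-based rates admits an optimal schedule consisting only of
intra-cluster groups. -/
theorem stmt_15 (N K : ℕ) (cluster : Fin N → Fin K)
    (d : Fin N → ℝ) (hd : ∀ i, 0 ≤ d i)
    (hunif : ∀ i l, cluster i = cluster l → d i = d l)
    (ρ : Fin K → (Fin K → ℕ) → ℝ) (hρ : ∀ j v, 0 ≤ ρ j v)
    (g : Finset (Fin N) → Fin K → ℕ)
    (hg : ∀ c j, g c j = (c.filter (fun i => cluster i = j)).card)
    (hdom : ∀ c : Finset (Fin N), c.Nonempty →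
      (∃ i ∈ c, ∃ l ∈ c, cluster i ≠ cluster l) →
      ∀ j, (c.filter (fun i => cluster i = j)).Nonempty →
        ∃ ℓ : ℕ, 1 ≤ ℓ ∧ ℓ ≤ (Finset.univ.filter (fun i => cluster i = j)).card ∧
          (∑ i ∈ c, ρ (cluster i) (g c)) ≤ (ℓ : ℝ) * ρ j (fun j' => if j' = j then ℓ else 0))
    (hfeas : ∃ t : Finset (Fin N) → ℝ, (∀ c, 0 ≤ t c) ∧
      ∀ i, ∑ c : Finset (Fin N), (if i ∈ c then ρ (cluster i) (g c) * t c else 0) = d i) :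
    ∃ t : Finset (Fin N) → ℝ, (∀ c, 0 ≤ t c) ∧
      (∀ i, ∑ c : Finset (Fin N), (if i ∈ c then ρ (cluster i) (g c) * t c else 0) = d i) ∧
      (∀ c, t c ≠ 0 → ∀ i ∈ c, ∀ l ∈ c, cluster i = cluster l) ∧
      (∀ t' : Finset (Fin N) → ℝ, (∀ c, 0 ≤ t' c) →
        (∀ i, ∑ c : Finset (Fin N), (if i ∈ c then ρ (cluster i) (g c) * t' c else 0) = d i) →
        (∑ c : Finset (Fin N), t c) ≤ ∑ c : Finset (Fin N), t' c) := by
  obtain rfl : g = clusterCount cluster := funext fun c => funext (hg c)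
  obtain ⟨D, hD, rfl⟩ := exists_nonneg_comp_eq hd hunif
  obtain ⟨t, ⟨ht, hdem⟩, hsupp, hopt⟩ :=
    exists_optimal_intraCluster_schedule hρ hdom hD hfeas
  exact ⟨t, ht, hdem, hsupp, fun t' ht' hdem' => hopt t' ⟨ht', hdem'⟩⟩
end

section
/- In the column generation algorithm for the MTSP with multi-cluster cardinality-based rates, given nonnegative dual values π, for each fixed profile g the group minimizing the reduced cost 1 − ∑_{i∈c} r_{i,c} π_i among groups with profile g is obtained by choosing, in each cluster j, the |c_j| links with largest π values. Hence the subproblem min over all 2^N − 1 groups of the reduced cost equals the min over the (∏_j (n_j+1)) − 1 profile-restricted candidates. -/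
/-!
Fix a profile. Splitting the weighted sum of a group by cluster, each cluster contributes its
rate (which depends only on the profile) times the sum of `π` over the group's links in that
cluster. Two groups with the same profile pick equally many links in each cluster, and an
exchange argument shows that the top-`π` links maximise that sum. So the candidate of a
group's profile has reduced cost at most that of the group, and the two infima agree because
the candidates are themselves nonempty groups.
-/

open Finset

namespace Finset

variable {ι M : Type*} [AddCommMonoid M] [LinearOrder M] [IsOrderedCancelAddMonoid M]

theorem sum_le_sum_of_card_eq_of_forall_le {s t : Finset ι} {f : ι → M} (hst : #s = #t)
    (hf : ∀ x ∈ s, ∀ y ∈ t, f x ≤ f y) : ∑ x ∈ s, f x ≤ ∑ y ∈ t, f y := by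
  rcases t.eq_empty_or_nonempty with rfl | ht
  · rw [card_eq_zero.mp hst]
  calc ∑ x ∈ s, f x ≤ #s • t.inf' ht f :=
        sum_le_card_nsmul s f _ fun x hx => le_inf' ht f fun y hy => hf x hx y hy
    _ = #t • t.inf' ht f := by rw [hst]
    _ ≤ ∑ y ∈ t, f y := card_nsmul_le_sum t f _ fun y hy => inf'_le f hy

theorem sum_le_sum_of_card_eq_of_sdiff_le [DecidableEq ι] {s t : Finset ι} {f : ι → M}
    (hst : #s = #t) (hf : ∀ x ∈ s \ t, ∀ y ∈ t \ s, f x ≤ f y) :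
    ∑ x ∈ s, f x ≤ ∑ y ∈ t, f y := by
  have hsdiff : #(s \ t) = #(t \ s) := by
    have := card_inter_add_card_sdiff s t
    have := card_inter_add_card_sdiff t s
    rw [inter_comm] at this
    omega
  rw [← sum_inter_add_sum_sdiff s t, ← sum_inter_add_sum_sdiff t s, inter_comm t s]
  exact add_le_add le_rfl (sum_le_sum_of_card_eq_of_forall_le hsdiff hf)

theorem card_eq_of_card_filter_eq {κ : Type*} [Fintype κ] [DecidableEq κ] {cl : ι → κ}
    {s t : Finset ι} (h : ∀ j, #{i ∈ s | cl i = j} = #{i ∈ t | cl i = j}) : #s = #t := by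
  rw [card_eq_sum_card_fiberwise fun i _ => mem_univ (cl i),
    card_eq_sum_card_fiberwise fun i _ => mem_univ (cl i)]
  exact sum_congr rfl fun j _ => h j

end Finset

variable {ι κ : Type*} [DecidableEq ι] [Fintype κ] [DecidableEq κ]

theorem sum_weight_mul_le_of_top_in_clusters {cl : ι → κ} {π : ι → ℝ} {w : κ → ℝ}
    (hw : ∀ j, 0 ≤ w j) {c D : Finset ι}
    (hcard : ∀ j, #{i ∈ c | cl i = j} = #{i ∈ D | cl i = j})
    (htop : ∀ i ∈ D, ∀ l ∉ D, cl l = cl i → π l ≤ π i) :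
    ∑ i ∈ c, w (cl i) * π i ≤ ∑ i ∈ D, w (cl i) * π i := by
  have hfiber : ∀ (s : Finset ι) j,
      ∑ i ∈ s with cl i = j, w (cl i) * π i = w j * ∑ i ∈ s with cl i = j, π i := by
    intro s j
    rw [mul_sum]
    exact sum_congr rfl fun i hi => by rw [(mem_filter.mp hi).2]
  rw [← sum_fiberwise c cl, ← sum_fiberwise D cl]
  refine sum_le_sum fun j _ => ?_
  rw [hfiber, hfiber]
  refine mul_le_mul_of_nonneg_left (sum_le_sum_of_card_eq_of_sdiff_le (hcard j) ?_) (hw j)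
  intro x hx y hy
  obtain ⟨⟨-, hxj⟩, hxD⟩ := by simpa only [mem_sdiff, mem_filter] using hx
  obtain ⟨⟨hyD, hyj⟩, -⟩ := by simpa only [mem_sdiff, mem_filter] using hy
  exact htop y hyD x (fun h => hxD ⟨h, hxj⟩) (hxj.trans hyj.symm)

theorem sInf_setOf_eq_sInf_setOf_comp {α β : Type*} [Finite α]
    [ConditionallyCompleteLinearOrder β] (p : α → Prop) (f : α → β) (φ : α → α)
    (hp : ∀ a, p a → p (φ a)) (hle : ∀ a, f (φ a) ≤ f a) :
    sInf {v | ∃ a, p a ∧ v = f a} = sInf {v | ∃ a, p a ∧ v = f (φ a)} := by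
  set S := {v | ∃ a, p a ∧ v = f a}
  set T := {v | ∃ a, p a ∧ v = f (φ a)}
  have hTS : T ⊆ S := fun _ ⟨a, ha, hv⟩ => ⟨φ a, hp a ha, hv⟩
  have hSbdd : BddBelow S := by
    refine ((Set.finite_range f).subset ?_).bddBelow
    rintro v ⟨a, -, rfl⟩
    exact ⟨a, rfl⟩
  rcases isEmpty_or_nonempty {a // p a} with hempty | ⟨⟨a₀, ha₀⟩⟩
  · have hSe : S = ∅ := Set.eq_empty_of_forall_notMem fun v ⟨a, ha, _⟩ => hempty.false ⟨a, ha⟩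
    have hTe : T = ∅ := Set.eq_empty_of_forall_notMem fun v ⟨a, ha, _⟩ => hempty.false ⟨a, ha⟩
    rw [hSe, hTe]
  refine le_antisymm (csInf_le_csInf hSbdd ⟨_, a₀, ha₀, rfl⟩ hTS) (le_csInf ⟨_, a₀, ha₀, rfl⟩ ?_)
  rintro v ⟨a, ha, rfl⟩
  exact (csInf_le (hSbdd.mono hTS) ⟨a, ha, rfl⟩).trans (hle a)

theorem stmt_16_general (N K : ℕ) (cluster : Fin N → Fin K)
    (π : Fin N → ℝ)
    (ρ : Fin K → (Fin K → ℕ) → ℝ) (hρ : ∀ j v, 0 ≤ ρ j v)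
    (g : Finset (Fin N) → Fin K → ℕ)
    (hg : ∀ c j, g c j = (c.filter (fun i => cluster i = j)).card)
    (cand : (Fin K → ℕ) → Finset (Fin N))
    (hcand : ∀ c : Finset (Fin N), g (cand (g c)) = g c)
    (htop : ∀ v : Fin K → ℕ, ∀ i ∈ cand v, ∀ l, l ∉ cand v →
      cluster l = cluster i → π l ≤ π i) :
    (∀ c : Finset (Fin N),
      1 - ∑ i ∈ cand (g c), ρ (cluster i) (g (cand (g c))) * π i
        ≤ 1 - ∑ i ∈ c, ρ (cluster i) (g c) * π i) ∧
    sInf {v | ∃ c : Finset (Fin N), c.Nonempty ∧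
        v = 1 - ∑ i ∈ c, ρ (cluster i) (g c) * π i}
      = sInf {v | ∃ c : Finset (Fin N), c.Nonempty ∧
        v = 1 - ∑ i ∈ cand (g c), ρ (cluster i) (g (cand (g c))) * π i} := by
  have hcard : ∀ c j, #{i ∈ c | cluster i = j} = #{i ∈ cand (g c) | cluster i = j} :=
    fun c j => by rw [← hg, ← hg, hcand]
  have hcost : ∀ c : Finset (Fin N),
      1 - ∑ i ∈ cand (g c), ρ (cluster i) (g (cand (g c))) * π i
        ≤ 1 - ∑ i ∈ c, ρ (cluster i) (g c) * π i := fun c => by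
    rw [hcand c]
    exact sub_le_sub_left
      (sum_weight_mul_le_of_top_in_clusters (hρ · (g c)) (hcard c) (htop (g c))) 1
  refine ⟨hcost, sInf_setOf_eq_sInf_setOf_comp Finset.Nonempty
    (fun c => 1 - ∑ i ∈ c, ρ (cluster i) (g c) * π i) (fun c => cand (g c)) ?_ hcost⟩
  intro c hc
  rw [← card_pos, ← card_eq_of_card_filter_eq (hcard c)]
  exact card_pos.mpr hc

/-- In column generation for the MTSP with multi-cluster
cardinality-based rates, for each profile the candidate group taking the links with
largest π values in each cluster minimizes the reduced cost among groups with that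
profile; hence the subproblem minimum over all nonempty groups equals the minimum
over the profile-restricted candidates. -/
theorem stmt_16 (N K : ℕ) (cluster : Fin N → Fin K)
    (π : Fin N → ℝ) (hπ : ∀ i, 0 ≤ π i)
    (ρ : Fin K → (Fin K → ℕ) → ℝ) (hρ : ∀ j v, 0 ≤ ρ j v)
    (g : Finset (Fin N) → Fin K → ℕ)
    (hg : ∀ c j, g c j = (c.filter (fun i => cluster i = j)).card)
    (cand : (Fin K → ℕ) → Finset (Fin N))
    (hcand : ∀ c : Finset (Fin N), g (cand (g c)) = g c)
    (htop : ∀ v : Fin K → ℕ, ∀ i ∈ cand v, ∀ l, l ∉ cand v →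
      cluster l = cluster i → π l ≤ π i) :
    (∀ c : Finset (Fin N),
      1 - ∑ i ∈ cand (g c), ρ (cluster i) (g (cand (g c))) * π i
        ≤ 1 - ∑ i ∈ c, ρ (cluster i) (g c) * π i) ∧
    sInf {v | ∃ c : Finset (Fin N), c.Nonempty ∧
        v = 1 - ∑ i ∈ c, ρ (cluster i) (g c) * π i}
      = sInf {v | ∃ c : Finset (Fin N), c.Nonempty ∧
        v = 1 - ∑ i ∈ cand (g c), ρ (cluster i) (g (cand (g c))) * π i} :=
  stmt_16_general N K cluster π ρ hρ g hg cand hcand htop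
end

section
/- If for every profile g the group c(g) consisting of the links with largest demands in each cluster (with the required cardinalities) satisfies the dual constraint ∑_{j} r^j_g ∑_{i∈c(g)_j} π_i ≤ 1, and π is coordinatewise descending within each cluster (matching the descending order of demands), then π satisfies the dual constraint for all 2^N − 1 groups. Hence the dual LP is equivalent to an LP with at most N − 1 + ∏_{j=1}^K (n_j+1) constraints. -/
/-!
Exchange argument: if a group `c` is not made of the first links of its clusters, some
`i ∈ c` can be swapped for a lower-index `l ∉ c` of the same cluster. The swap keeps the
cardinality profile, hence every rate, and does not decrease the left-hand side because
`π i ≤ π l`. Since the index sum strictly drops, finitely many swaps reach a group of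
first links, where the constraint is assumed.
-/

open Finset

theorem Finset.card_filter_insert_erase {α : Type*} [DecidableEq α] {p : α → Prop}
    [DecidablePred p] {c : Finset α} {i l : α} (hi : i ∈ c) (hl : l ∉ c) (hpl : p l ↔ p i) :
    #((insert l (c.erase i)).filter p) = #(c.filter p) := by
  rw [filter_insert, filter_erase]
  by_cases hpi : p i
  · have hl' : l ∉ (c.filter p).erase i := fun h => hl (mem_filter.1 (mem_of_mem_erase h)).1
    rw [if_pos (hpl.2 hpi), card_insert_of_notMem hl',
      card_erase_add_one (mem_filter.2 ⟨hi, hpi⟩)]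
  · rw [if_neg (mt hpl.1 hpi), erase_eq_of_notMem (fun h => hpi (mem_filter.1 h).2)]

theorem Finset.sum_le_sum_insert_erase {α M : Type*} [DecidableEq α] [AddCommMonoid M]
    [PartialOrder M] [IsOrderedAddMonoid M] {f : α → M} {c : Finset α} {i l : α}
    (hi : i ∈ c) (hl : l ∉ c) (hf : f i ≤ f l) :
    ∑ x ∈ c, f x ≤ ∑ x ∈ insert l (c.erase i), f x := by
  rw [sum_insert (fun h => hl (mem_of_mem_erase h)), ← sum_erase_add c f hi, add_comm]
  exact add_le_add_left hf _

theorem Fin.sum_val_insert_erase_lt {N : ℕ} {c : Finset (Fin N)} {i l : Fin N}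
    (hi : i ∈ c) (hl : l ∉ c) (hli : l < i) :
    ∑ x ∈ insert l (c.erase i), (x : ℕ) < ∑ x ∈ c, (x : ℕ) := by
  rw [sum_insert (fun h => hl (mem_of_mem_erase h)), ← sum_erase_add c _ hi]
  have : (l : ℕ) < i := hli
  omega

section ClusterSwap

variable {N K : ℕ} (cluster : Fin N → Fin K)

def IsClusterInitial (c : Finset (Fin N)) : Prop :=
  ∀ i ∈ c, ∀ l, l ∉ c → cluster l = cluster i → i ≤ l

theorem induction_on_cluster_swap {P : Finset (Fin N) → Prop}
    (initial : ∀ c, IsClusterInitial cluster c → P c)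
    (swap : ∀ c i l, i ∈ c → l ∉ c → cluster l = cluster i → l < i →
      P (insert l (c.erase i)) → P c)
    (c : Finset (Fin N)) : P c := by
  induction hn : ∑ x ∈ c, (x : ℕ) using Nat.strong_induction_on generalizing c with
  | _ n ih =>
    by_cases hc : IsClusterInitial cluster c
    · exact initial c hc
    · obtain ⟨i, hi, l, hl, hcl, hli⟩ : ∃ i ∈ c, ∃ l, l ∉ c ∧ cluster l = cluster i ∧ l < i := by
        simpa [IsClusterInitial] using hc
      exact swap c i l hi hl hcl hli
        (ih _ (hn ▸ Fin.sum_val_insert_erase_lt hi hl hli) _ rfl)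

end ClusterSwap

theorem stmt_17_general (N K : ℕ) (cluster : Fin N → Fin K)
    (π : Fin N → ℝ)
    (hdesc : ∀ i l : Fin N, cluster i = cluster l → i ≤ l → π l ≤ π i)
    (ρ : Fin K → (Fin K → ℕ) → ℝ) (hρ : ∀ j v, 0 ≤ ρ j v)
    (g : Finset (Fin N) → Fin K → ℕ)
    (hg : ∀ c j, g c j = (c.filter (fun i => cluster i = j)).card)
    (htop : ∀ cmax : Finset (Fin N), cmax.Nonempty →
      (∀ i ∈ cmax, ∀ l, l ∉ cmax → cluster l = cluster i → i ≤ l) →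
      ∑ i ∈ cmax, ρ (cluster i) (g cmax) * π i ≤ 1) :
    ∀ c : Finset (Fin N), c.Nonempty → ∑ i ∈ c, ρ (cluster i) (g c) * π i ≤ 1 := by
  refine induction_on_cluster_swap cluster (fun c hc hne => htop c hne hc) ?_
  intro c i l hi hl hcl hli ih hne
  have hprofile : g (insert l (c.erase i)) = g c := by
    funext j
    rw [hg, hg, card_filter_insert_erase hi hl (by rw [hcl])]
  calc ∑ x ∈ c, ρ (cluster x) (g c) * π x
      ≤ ∑ x ∈ insert l (c.erase i), ρ (cluster x) (g c) * π x :=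
        sum_le_sum_insert_erase hi hl (by
          rw [hcl]; exact mul_le_mul_of_nonneg_left (hdesc l i hcl hli.le) (hρ _ _))
    _ ≤ 1 := hprofile ▸ ih (insert_nonempty _ _)

/-- If π is coordinatewise descending within each cluster (matching
the descending order of demands) and the dual constraint holds for every group made
of the first (lowest-index) links of each cluster, then the dual constraint holds
for all groups. -/
theorem stmt_17 (N K : ℕ) (cluster : Fin N → Fin K)
    (d : Fin N → ℝ)
    (hd : ∀ i l : Fin N, cluster i = cluster l → i ≤ l → d l ≤ d i)
    (π : Fin N → ℝ) (hπ : ∀ i, 0 ≤ π i)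
    (hdesc : ∀ i l : Fin N, cluster i = cluster l → i ≤ l → π l ≤ π i)
    (ρ : Fin K → (Fin K → ℕ) → ℝ) (hρ : ∀ j v, 0 ≤ ρ j v)
    (g : Finset (Fin N) → Fin K → ℕ)
    (hg : ∀ c j, g c j = (c.filter (fun i => cluster i = j)).card)
    (htop : ∀ cmax : Finset (Fin N), cmax.Nonempty →
      (∀ i ∈ cmax, ∀ l, l ∉ cmax → cluster l = cluster i → i ≤ l) →
      ∑ i ∈ cmax, ρ (cluster i) (g cmax) * π i ≤ 1) :
    ∀ c : Finset (Fin N), c.Nonempty → ∑ i ∈ c, ρ (cluster i) (g c) * π i ≤ 1 :=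
  stmt_17_general N K cluster π hdesc ρ hρ g hg htop
end
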